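/- arXiv:1809.07718 — 2 statements merged into one kernel-verified Lean document; each statement's English description precedes it below -/
import Mathlib

section
/- For the cactus C^c with k ≥ 2 triangles, α + 1 is an eigenvalue of A_α(C^c) with multiplicity at least k−1, witnessed by vectors assigning value 1 to both vertices v_1, v_1' of one triangle, −1 to both vertices of another triangle, and 0 elsewhere. -/
open Matrix

open scoped Classical

/-- The `A_α` matrix of a graph: `A_α(G) = α·D(G) + (1-α)·A(G)`. -/
noncomputable def Aalpha {V : Type*} [Fintype V] [DecidableEq V] (G : SimpleGraph V)
    [DecidableRel G.Adj] (α : ℝ) : Matrix V V ℝ :=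
  α • Matrix.diagonal (fun v => (G.degree v : ℝ)) + (1 - α) • G.adjMatrix ℝ

/-- Vertices of the cactus `C^c`. -/
abbrev cactusV (k t : ℕ) := Unit ⊕ (Fin k ⊕ Fin k) ⊕ Fin t

/-- The cactus `C^c`: a center joined to `k` triangles `v v_i v_i'` and `t` pendant
vertices `u_j`. -/
def cactus (k t : ℕ) : SimpleGraph (cactusV k t) :=
  SimpleGraph.fromRel (fun a b =>
    (a = Sum.inl () ∧ b ≠ Sum.inl ()) ∨
    (∃ i : Fin k, a = Sum.inr (Sum.inl (Sum.inl i)) ∧ b = Sum.inr (Sum.inl (Sum.inr i))))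

/-!
A pendant triangle `c u w` (with `u`, `w` of degree 2) contributes the vector `𝟙_u + 𝟙_w`,
which `A_α` maps to `(α + 1)(𝟙_u + 𝟙_w) + 2(1 - α) 𝟙_c`. Two pendant triangles at the same
vertex `c` therefore give the eigenvector `𝟙_u + 𝟙_w - 𝟙_u' - 𝟙_w'` for `α + 1`: the
contributions at `c` cancel. In `C^c` all `k` triangles hang at the centre, and the `k - 1`
differences with the first triangle are independent, since the `i`-th one is the only one that
is nonzero at `v_{i+1}`.
-/

section PendantTriangle

variable {V : Type*} [Fintype V] [DecidableEq V] (G : SimpleGraph V) [DecidableRel G.Adj]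
  (α : ℝ)

lemma Aalpha_apply (x y : V) :
    Aalpha G α x y = (if x = y then α * G.degree x else 0) + if G.Adj x y then 1 - α else 0 := by
  simp [Aalpha, Matrix.diagonal_apply, SimpleGraph.adjMatrix_apply, apply_ite (α * ·)]

variable {G} {c u w : V}

lemma Aalpha_mulVec_single_add_single_of_pendant
    (hu : G.neighborFinset u = {c, w}) (hw : G.neighborFinset w = {c, u}) :
    Aalpha G α *ᵥ (Pi.single u 1 + Pi.single w 1) =
      (α + 1) • (Pi.single u 1 + Pi.single w 1) + (2 * (1 - α)) • Pi.single c 1 := by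
  have hadj_u (x : V) : G.Adj x u ↔ x = c ∨ x = w := by
    rw [G.adj_comm, ← G.mem_neighborFinset, hu, Finset.mem_insert, Finset.mem_singleton]
  have hadj_w (x : V) : G.Adj x w ↔ x = c ∨ x = u := by
    rw [G.adj_comm, ← G.mem_neighborFinset, hw, Finset.mem_insert, Finset.mem_singleton]
  have hwu : w ≠ u := G.ne_of_adj ((hadj_u w).2 (.inr rfl))
  have hcu : c ≠ u := G.ne_of_adj ((hadj_u c).2 (.inl rfl))
  have hcw : c ≠ w := G.ne_of_adj ((hadj_w c).2 (.inl rfl))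
  have hdeg_u : G.degree u = 2 := by
    rw [← G.card_neighborFinset_eq_degree, hu, Finset.card_pair hcw]
  have hdeg_w : G.degree w = 2 := by
    rw [← G.card_neighborFinset_eq_degree, hw, Finset.card_pair hcu]
  ext x
  simp only [mulVec_add, mulVec_single_one, Pi.add_apply, Pi.smul_apply, smul_eq_mul, col_apply,
    Aalpha_apply, hadj_u, hadj_w, Pi.single_apply]
  by_cases hxu : x = u
  · subst hxu
    simp only [↓reduceIte, hdeg_u, Nat.cast_ofNat, hcu.symm, hwu.symm, or_self, add_zero, or_true,
      zero_add, mul_one, mul_zero]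
    ring
  by_cases hxw : x = w
  · subst hxw
    simp only [hwu, ↓reduceIte, hcw.symm, or_true, zero_add, hdeg_w, Nat.cast_ofNat, or_self,
      add_zero, mul_one, mul_zero]
    ring
  by_cases hxc : x = c
  · subst hxc
    simp only [hcu, ↓reduceIte, hcw, or_false, zero_add, add_zero, mul_zero, mul_one]
    ring
  · simp [hxu, hxw, hxc]

lemma Aalpha_mulVec_sub_of_pendant {u' w' : V}
    (hu : G.neighborFinset u = {c, w}) (hw : G.neighborFinset w = {c, u})
    (hu' : G.neighborFinset u' = {c, w'}) (hw' : G.neighborFinset w' = {c, u'}) :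
    Aalpha G α *ᵥ ((Pi.single u 1 + Pi.single w 1) - (Pi.single u' 1 + Pi.single w' 1)) =
      (α + 1) • ((Pi.single u 1 + Pi.single w 1) - (Pi.single u' 1 + Pi.single w' 1)) := by
  rw [mulVec_sub, Aalpha_mulVec_single_add_single_of_pendant α hu hw,
    Aalpha_mulVec_single_add_single_of_pendant α hu' hw', smul_sub]
  abel

end PendantTriangle

namespace cactus

variable {k t : ℕ}

abbrev center : cactusV k t := Sum.inl ()

abbrev left (i : Fin k) : cactusV k t := Sum.inr (Sum.inl (Sum.inl i))

abbrev right (i : Fin k) : cactusV k t := Sum.inr (Sum.inl (Sum.inr i))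

lemma adj_iff (a b : cactusV k t) :
    (cactus k t).Adj a b ↔ a ≠ b ∧
      ((a = center ∧ b ≠ center) ∨ (b = center ∧ a ≠ center) ∨
       (∃ i, a = left i ∧ b = right i) ∨ (∃ i, b = left i ∧ a = right i)) := by
  rw [cactus, SimpleGraph.fromRel_adj]
  aesop

lemma neighborFinset_left (i : Fin k) :
    (cactus k t).neighborFinset (left i) = {center, right i} := by
  ext x
  simp only [SimpleGraph.mem_neighborFinset, adj_iff, Finset.mem_insert, Finset.mem_singleton]
  constructor
  · rintro ⟨-, h | h | ⟨j, h₁, h₂⟩ | ⟨j, h₁, h₂⟩⟩ <;> simp_all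
  · rintro (rfl | rfl) <;> simp

lemma neighborFinset_right (i : Fin k) :
    (cactus k t).neighborFinset (right i) = {center, left i} := by
  ext x
  simp only [SimpleGraph.mem_neighborFinset, adj_iff, Finset.mem_insert, Finset.mem_singleton]
  constructor
  · rintro ⟨-, h | h | ⟨j, h₁, h₂⟩ | ⟨j, h₁, h₂⟩⟩ <;> simp_all
  · rintro (rfl | rfl) <;> simp

noncomputable def triangleVec (i : Fin k) : cactusV k t → ℝ :=
  Pi.single (left i) 1 + Pi.single (right i) 1

lemma Aalpha_mulVec_triangleVec_sub (α : ℝ) (i j : Fin k) :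
    Aalpha (cactus k t) α *ᵥ (triangleVec i - triangleVec j) =
      (α + 1) • (triangleVec i - triangleVec j) :=
  Aalpha_mulVec_sub_of_pendant α (neighborFinset_left i) (neighborFinset_right i)
    (neighborFinset_left j) (neighborFinset_right j)

lemma linearIndependent_triangleVec_sub (hk : 1 ≤ k) :
    LinearIndependent ℝ fun i : Fin (k - 1) =>
      (triangleVec ⟨0, by omega⟩ - triangleVec ⟨i + 1, by omega⟩ : cactusV k t → ℝ) := by
  refine .of_comp (-LinearMap.funLeft ℝ ℝ fun j : Fin (k - 1) => left ⟨j + 1, by omega⟩) ?_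
  convert Pi.linearIndependent_single_one (Fin (k - 1)) ℝ using 1
  ext i j
  simp [triangleVec, Pi.single_apply, Fin.ext_iff, eq_comm]

end cactus

/-- For `k ≥ 2`, `α + 1` is an eigenvalue of `A_α(C^c)` with multiplicity at least
`k-1`, witnessed by vectors assigning `1` to both vertices of one triangle, `-1` to
both vertices of another triangle, and `0` elsewhere; the corresponding `k-1`
eigenvectors are linearly independent. -/
theorem stmt_11 (k t : ℕ) (hk : 2 ≤ k) (α : ℝ)
    (Z : Fin k → Fin k → cactusV k t → ℝ)
    (hZ : ∀ i₁ i₂ : Fin k, Z i₁ i₂ = fun x =>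
      if x = Sum.inr (Sum.inl (Sum.inl i₁)) ∨ x = Sum.inr (Sum.inl (Sum.inr i₁)) then (1 : ℝ)
      else if x = Sum.inr (Sum.inl (Sum.inl i₂)) ∨ x = Sum.inr (Sum.inl (Sum.inr i₂))
        then (-1 : ℝ) else 0) :
    (∀ i₁ i₂ : Fin k, i₁ ≠ i₂ →
      (Aalpha (cactus k t) α).mulVec (Z i₁ i₂) = (α + 1) • Z i₁ i₂) ∧
    LinearIndependent ℝ
      (fun i : Fin (k - 1) => Z ⟨0, by omega⟩ ⟨i.val + 1, by omega⟩) := by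
  have hZ_sub (i₁ i₂ : Fin k) (h : i₁ ≠ i₂) :
      Z i₁ i₂ = cactus.triangleVec i₁ - cactus.triangleVec i₂ := by
    ext x
    rw [hZ]
    simp only [cactus.triangleVec, Pi.sub_apply, Pi.add_apply, Pi.single_apply]
    split_ifs <;> simp_all
  refine ⟨fun i₁ i₂ h => hZ_sub i₁ i₂ h ▸ cactus.Aalpha_mulVec_triangleVec_sub α i₁ i₂, ?_⟩
  convert cactus.linearIndependent_triangleVec_sub (k := k) (t := t) (by omega) using 1
  funext i
  exact hZ_sub _ _ (Fin.ne_of_val_ne (by simp))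
end

section
/- Let G be a connected graph with α ∈ [0,1), let X be a nonnegative eigenvector of A_α(G) for its largest eigenvalue ρ(G), let v, w be distinct nonadjacent-or-adjacent vertices and S a nonempty set of vertices with S ⊆ N(v) \ (N(w) ∪ {w}), and let H be obtained from G by deleting the edges {uv : u ∈ S} and adding the edges {uw : u ∈ S}. If x_w ≥ x_v, then ρ(H) > ρ(G). -/
/-!
Rotating the edges `vu`, `u ∈ S`, onto `w` changes the quadratic form of `A_α` at `X` by
`α|S|(x_w² - x_v²) + 2(1-α)(x_w - x_v)∑_{u∈S} x_u ≥ 0`, so `ρ(H) ≥ Xᵀ A_α(H) X ≥ ρ(G)`.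
If `ρ(H) = ρ(G)`, then `X` attains the Rayleigh bound for `A_α(H)`, hence is an eigenvector of
`A_α(H)` for `ρ(H)`, because `ρ(H)·I - A_α(H)` is positive semidefinite. This fails at `w`:
there the row of `A_α(H) X` exceeds `ρ(G) x_w` by `α|S|x_w + (1-α)∑_{u∈S} x_u`, which is
positive as `X` is a positive (Perron) vector of the connected graph `G`.
-/

open Matrix

open Finset
open scoped MatrixOrder ComplexOrder

theorem Matrix.algebraMap_sub_mulVec {n R : Type*} [Fintype n] [DecidableEq n] [CommRing R]
    (A : Matrix n n R) (r : R) (x : n → R) :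
    (algebraMap R (Matrix n n R) r - A) *ᵥ x = r • x - A *ᵥ x := by
  rw [sub_mulVec, Algebra.algebraMap_eq_smul_one, smul_mulVec, one_mulVec]

namespace Matrix.IsHermitian

variable {n : Type*} [Fintype n] [DecidableEq n]

theorem posSemidef_algebraMap_iSup_eigenvalues_sub {𝕜 : Type*} [RCLike 𝕜]
    {A : Matrix n n 𝕜} (hA : A.IsHermitian) :
    (algebraMap ℝ (Matrix n n 𝕜) (⨆ i, hA.eigenvalues i) - A).PosSemidef := by
  refine Matrix.le_iff.mp (le_algebraMap_of_spectrum_le (fun x hx => ?_) hA)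
  obtain ⟨i, rfl⟩ := hA.spectrum_real_eq_range_eigenvalues ▸ hx
  exact le_ciSup (Set.finite_range _).bddAbove i

variable {A : Matrix n n ℝ} (hA : A.IsHermitian) (x : n → ℝ)

theorem dotProduct_mulVec_le_iSup_eigenvalues_mul :
    x ⬝ᵥ A *ᵥ x ≤ (⨆ i, hA.eigenvalues i) * (x ⬝ᵥ x) := by
  have := hA.posSemidef_algebraMap_iSup_eigenvalues_sub.dotProduct_mulVec_nonneg x
  rw [star_trivial, algebraMap_sub_mulVec, dotProduct_sub, dotProduct_smul, smul_eq_mul] at this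
  linarith

theorem mulVec_eq_iSup_eigenvalues_smul_of_dotProduct_mulVec_eq
    (h : x ⬝ᵥ A *ᵥ x = (⨆ i, hA.eigenvalues i) * (x ⬝ᵥ x)) :
    A *ᵥ x = (⨆ i, hA.eigenvalues i) • x := by
  have := hA.posSemidef_algebraMap_iSup_eigenvalues_sub.dotProduct_mulVec_zero_iff x
  rw [star_trivial, algebraMap_sub_mulVec, dotProduct_sub, dotProduct_smul, smul_eq_mul, h,
    sub_self, sub_eq_zero] at this
  exact (this.mp rfl).symm

end Matrix.IsHermitian

section Aalpha

variable {V : Type*} [Fintype V] [DecidableEq V] (G : SimpleGraph V) [DecidableRel G.Adj]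
  (α : ℝ) (x : V → ℝ)

theorem Aalpha_mulVec_apply (u : V) :
    (Aalpha G α *ᵥ x) u = α * G.degree u * x u + (1 - α) * ∑ t ∈ G.neighborFinset u, x t := by
  simp [Aalpha, add_mulVec, smul_mulVec, mulVec_diagonal, SimpleGraph.adjMatrix_mulVec_apply,
    mul_assoc]

theorem Aalpha_mulVec_apply_eq_of_neighborFinset_eq {H : SimpleGraph V} [DecidableRel H.Adj]
    {u : V} (h : H.neighborFinset u = G.neighborFinset u) :
    (Aalpha H α *ᵥ x) u = (Aalpha G α *ᵥ x) u := by
  rw [Aalpha_mulVec_apply, Aalpha_mulVec_apply, ← G.card_neighborFinset_eq_degree,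
    ← H.card_neighborFinset_eq_degree, h]

variable {G α x}

theorem Aalpha_eigenvector_pos (hconn : G.Connected) (hα : α < 1) (hx : 0 ≤ x) (hx0 : x ≠ 0)
    {ρ : ℝ} (hρ : Aalpha G α *ᵥ x = ρ • x) (u : V) : 0 < x u := by
  have hzero_adj : ∀ a b, G.Adj a b → x a = 0 → x b = 0 := by
    intro a b hab ha
    have hrow := congrFun hρ a
    rw [Aalpha_mulVec_apply, Pi.smul_apply, ha, smul_zero, mul_zero, zero_add,
      mul_eq_zero, sub_eq_zero] at hrow
    have hsum := hrow.resolve_left hα.ne'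
    exact (sum_eq_zero_iff_of_nonneg fun t _ => hx t).mp hsum b (by simpa using hab)
  refine (hx u).lt_of_ne' fun hu => hx0 (funext fun t => ?_)
  obtain ⟨p⟩ := hconn.preconnected u t
  induction p with
  | nil => exact hu
  | cons hab _ ih => exact ih (hzero_adj _ _ hab hu)

end Aalpha

/-- `H` is obtained from `G` by replacing the edges `vu` with `wu` for `u ∈ S`. -/
structure SimpleGraph.IsEdgeRotation {V : Type*} (G H : SimpleGraph V) (v w : V) (S : Finset V) :
    Prop where
  ne : v ≠ w
  adj_left : ∀ u ∈ S, G.Adj v u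
  not_adj_right : ∀ u ∈ S, ¬ G.Adj w u
  ne_right : ∀ u ∈ S, u ≠ w
  adj_iff : ∀ a b, H.Adj a b ↔
    (G.Adj a b ∧ ¬ (a = v ∧ b ∈ S) ∧ ¬ (b = v ∧ a ∈ S)) ∨ (a = w ∧ b ∈ S) ∨ (b = w ∧ a ∈ S)

namespace SimpleGraph.IsEdgeRotation

variable {V : Type*} {G H : SimpleGraph V} {v w : V} {S : Finset V}

theorem left_notMem (h : G.IsEdgeRotation H v w S) : v ∉ S :=
  fun hv => G.loopless.irrefl v (h.adj_left v hv)

theorem right_notMem (h : G.IsEdgeRotation H v w S) : w ∉ S :=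
  fun hw => h.ne_right w hw rfl

theorem ne_left_of_mem (h : G.IsEdgeRotation H v w S) {u : V} (hu : u ∈ S) : u ≠ v := by
  rintro rfl; exact h.left_notMem hu

variable [Fintype V] [DecidableRel G.Adj] [DecidableRel H.Adj]

theorem neighborFinset_of_notMem (h : G.IsEdgeRotation H v w S) {u : V} (hu : u ∉ S)
    (huv : u ≠ v) (huw : u ≠ w) : H.neighborFinset u = G.neighborFinset u := by
  ext b
  simp only [mem_neighborFinset, h.adj_iff]
  grind

variable [DecidableEq V]

theorem neighborFinset_left (h : G.IsEdgeRotation H v w S) :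
    H.neighborFinset v = G.neighborFinset v \ S := by
  ext b
  simp only [mem_neighborFinset, mem_sdiff, h.adj_iff]
  grind [h.left_notMem, h.ne]

theorem neighborFinset_right (h : G.IsEdgeRotation H v w S) :
    H.neighborFinset w = G.neighborFinset w ∪ S := by
  ext b
  simp only [mem_neighborFinset, mem_union, h.adj_iff]
  grind [h.right_notMem, h.ne]

theorem neighborFinset_of_mem (h : G.IsEdgeRotation H v w S) {u : V} (hu : u ∈ S) :
    H.neighborFinset u = insert w ((G.neighborFinset u).erase v) := by
  ext b
  simp only [mem_neighborFinset, mem_insert, mem_erase, h.adj_iff]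
  grind [h.ne_left_of_mem hu, h.ne_right u hu]

variable (α : ℝ) (x : V → ℝ)

theorem Aalpha_mulVec_apply_left (h : G.IsEdgeRotation H v w S) :
    (Aalpha H α *ᵥ x) v =
      (Aalpha G α *ᵥ x) v - (α * #S * x v + (1 - α) * ∑ u ∈ S, x u) := by
  have hS : S ⊆ G.neighborFinset v := fun u hu => by simpa using h.adj_left u hu
  rw [Aalpha_mulVec_apply, Aalpha_mulVec_apply, h.neighborFinset_left,
    sum_sdiff_eq_sub hS, ← G.card_neighborFinset_eq_degree, ← H.card_neighborFinset_eq_degree,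
    h.neighborFinset_left, card_sdiff_of_subset hS, Nat.cast_sub (card_le_card hS)]
  ring

theorem Aalpha_mulVec_apply_right (h : G.IsEdgeRotation H v w S) :
    (Aalpha H α *ᵥ x) w =
      (Aalpha G α *ᵥ x) w + (α * #S * x w + (1 - α) * ∑ u ∈ S, x u) := by
  have hdisj : Disjoint (G.neighborFinset w) S :=
    Finset.disjoint_left.mpr fun _ hu huS => h.not_adj_right _ huS (by simpa using hu)
  rw [Aalpha_mulVec_apply, Aalpha_mulVec_apply, h.neighborFinset_right, sum_union hdisj,
    ← G.card_neighborFinset_eq_degree, ← H.card_neighborFinset_eq_degree,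
    h.neighborFinset_right, card_union_of_disjoint hdisj]
  push_cast
  ring

theorem Aalpha_mulVec_apply_of_mem (h : G.IsEdgeRotation H v w S) {u : V} (hu : u ∈ S) :
    (Aalpha H α *ᵥ x) u = (Aalpha G α *ᵥ x) u + (1 - α) * (x w - x v) := by
  have hv : v ∈ G.neighborFinset u := by simpa using (h.adj_left u hu).symm
  have hw : w ∉ (G.neighborFinset u).erase v := fun hw =>
    h.not_adj_right u hu ((G.mem_neighborFinset u w).mp (mem_of_mem_erase hw)).symm
  rw [Aalpha_mulVec_apply, Aalpha_mulVec_apply, h.neighborFinset_of_mem hu, sum_insert hw,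
    sum_erase_eq_sub hv, ← G.card_neighborFinset_eq_degree, ← H.card_neighborFinset_eq_degree,
    h.neighborFinset_of_mem hu, card_insert_of_notMem hw, card_erase_add_one hv]
  ring

theorem dotProduct_Aalpha_mulVec (h : G.IsEdgeRotation H v w S) :
    x ⬝ᵥ Aalpha H α *ᵥ x = x ⬝ᵥ Aalpha G α *ᵥ x +
      (α * #S * (x w ^ 2 - x v ^ 2) + 2 * (1 - α) * (x w - x v) * ∑ u ∈ S, x u) := by
  set T := insert v (insert w S)
  have hvwS : v ∉ insert w S := by simp [h.ne, h.left_notMem]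
  have hrest : ∀ u ∈ univ, u ∉ T → x u * (Aalpha H α *ᵥ x - Aalpha G α *ᵥ x) u = 0 := by
    intro u _ hu
    simp only [T, mem_insert, not_or] at hu
    rw [Pi.sub_apply, Aalpha_mulVec_apply_eq_of_neighborFinset_eq _ _ _
      (h.neighborFinset_of_notMem hu.2.2 hu.1 hu.2.1), sub_self, mul_zero]
  have hS : ∑ u ∈ S, x u * (Aalpha H α *ᵥ x - Aalpha G α *ᵥ x) u =
      (1 - α) * (x w - x v) * ∑ u ∈ S, x u := by
    rw [mul_sum]
    exact sum_congr rfl fun u hu => by rw [Pi.sub_apply, h.Aalpha_mulVec_apply_of_mem α x hu]; ring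
  rw [← sub_eq_iff_eq_add', ← dotProduct_sub, dotProduct, ← sum_subset (subset_univ T) hrest,
    sum_insert hvwS, sum_insert h.right_notMem, hS, Pi.sub_apply, Pi.sub_apply,
    h.Aalpha_mulVec_apply_left, h.Aalpha_mulVec_apply_right]
  ring

end SimpleGraph.IsEdgeRotation

/-- Edge-rotation lemma: if `X ≥ 0` is an eigenvector of `A_α(G)` for the largest
eigenvalue, `∅ ≠ S ⊆ N(v) \ (N(w) ∪ {w})`, `H` is obtained from `G` by replacing the
edges `uv` (`u ∈ S`) by `uw`, and `x_w ≥ x_v`, then `ρ(H) > ρ(G)`. -/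
theorem stmt_13 {V : Type*} [Fintype V] [DecidableEq V]
    (G H : SimpleGraph V) [DecidableRel G.Adj] [DecidableRel H.Adj]
    (α : ℝ) (hα : α ∈ Set.Ico (0 : ℝ) 1) (hconn : G.Connected)
    (v w : V) (hvw : v ≠ w) (S : Finset V) (hS : S.Nonempty)
    (hSsub : ∀ u ∈ S, G.Adj v u ∧ ¬ G.Adj w u ∧ u ≠ w)
    (hH : ∀ a b : V, H.Adj a b ↔
      ((G.Adj a b ∧ ¬ (a = v ∧ b ∈ S) ∧ ¬ (b = v ∧ a ∈ S)) ∨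
        (a = w ∧ b ∈ S) ∨ (b = w ∧ a ∈ S)))
    (hGh : (Aalpha G α).IsHermitian) (hHh : (Aalpha H α).IsHermitian)
    (X : V → ℝ) (hXnonneg : ∀ u, 0 ≤ X u) (hXunit : X ⬝ᵥ X = 1)
    (hEig : (Aalpha G α).mulVec X = (⨆ i, hGh.eigenvalues i) • X)
    (hxw : X v ≤ X w) :
    (⨆ i, hGh.eigenvalues i) < ⨆ i, hHh.eigenvalues i := by
  have hrot : G.IsEdgeRotation H v w S := ⟨hvw, fun u hu => (hSsub u hu).1,
    fun u hu => (hSsub u hu).2.1, fun u hu => (hSsub u hu).2.2, hH⟩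
  obtain ⟨hα0, hα1⟩ := hα
  have hX0 : X ≠ 0 := by rintro rfl; simp at hXunit
  have hpos := Aalpha_eigenvector_pos hconn hα1 hXnonneg hX0 hEig
  have hσ : 0 < ∑ u ∈ S, X u := sum_pos (fun u _ => hpos u) hS
  have hρ_le : (⨆ i, hGh.eigenvalues i) ≤ X ⬝ᵥ Aalpha H α *ᵥ X := by
    have hsq : X v ^ 2 ≤ X w ^ 2 := pow_le_pow_left₀ (hXnonneg v) hxw 2
    rw [hrot.dotProduct_Aalpha_mulVec, hEig, dotProduct_smul, smul_eq_mul, hXunit, mul_one,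
      le_add_iff_nonneg_right]
    exact add_nonneg (mul_nonneg (by positivity) (sub_nonneg.2 hsq))
      (mul_nonneg (mul_nonneg (by linarith) (sub_nonneg.2 hxw)) hσ.le)
  by_contra! hle
  have hray := hHh.dotProduct_mulVec_le_iSup_eigenvalues_mul X
  rw [hXunit, mul_one] at hray
  have hHX := hHh.mulVec_eq_iSup_eigenvalues_smul_of_dotProduct_mulVec_eq X
    (by rw [hXunit, mul_one]; linarith)
  have hw := congrFun hHX w
  rw [hrot.Aalpha_mulVec_apply_right, hEig] at hw
  simp only [Pi.smul_apply, smul_eq_mul] at hw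
  nlinarith [mul_le_mul_of_nonneg_right hle (hpos w).le, hpos w,
    mul_nonneg (mul_nonneg hα0 (Nat.cast_nonneg #S)) (hpos w).le, mul_pos (sub_pos.2 hα1) hσ]
end
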